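/- Let f be a transcendental entire function, R > 0 with M(r) > r for r ≥ R, and A(f) = ⋃_{L ∈ ℕ} A_R^{-L}(f). Then A(f) ⊆ Z(f), where Z(f) = {z : (1/n) · log log |f^n(z)| → ∞ as n → ∞}. -/

import Mathlib

open Complex Filter Set Function

noncomputable def maxMod (f : ℂ → ℂ) (r : ℝ) : ℝ :=
  sSup ((fun z => ‖f z‖) '' {z : ℂ | ‖z‖ = r})

def TranscendentalEntire (f : ℂ → ℂ) : Prop :=
  Differentiable ℂ f ∧ ¬ ∃ p : Polynomial ℂ, ∀ z, f z = p.eval z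

noncomputable def ALevel (f : ℂ → ℂ) (R : ℝ) (L : ℤ) : Set ℂ :=
  {z : ℂ | ∀ n : ℕ, 0 ≤ (n : ℤ) + L →
    ‖f^[n] z‖ ≥ (maxMod f)^[((n : ℤ) + L).toNat] R}

noncomputable def Afast (f : ℂ → ℂ) (R : ℝ) : Set ℂ :=
  ⋃ L : ℕ, ALevel f R (-(L : ℤ))

/-!
Cauchy's estimates show that an entire function with `M(r) ≤ r ^ k` for arbitrarily large `r`
is a polynomial, so for transcendental `f` we get `log M(r) / log r → ∞`. The orbit `M^n(R)`
increases, and it cannot converge: `M` is lower semicontinuous, so a finite limit `l ≥ R` would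
satisfy `M(l) ≤ l`. Hence `log M^(n+1)(R) / log M^n(R) → ∞`, i.e. the increments of
`log log M^n(R)` tend to infinity, which forces `log log M^n(R) / n → ∞`. A point of
`A_R^{-L}(f)` has `|f^n(z)| ≥ M^(n-L)(R)`, and the shift by `L` does not affect the limit.
-/

open Topology

theorem Differentiable.iteratedDeriv_eq_zero_of_frequently_norm_le_pow {f : ℂ → ℂ}
    (hf : Differentiable ℂ f) {k m : ℕ} (hkm : k < m)
    (h : ∃ᶠ r in atTop, ∀ z ∈ Metric.sphere (0 : ℂ) r, ‖f z‖ ≤ r ^ k) :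
    iteratedDeriv m f 0 = 0 := by
  have hcauchy : ∃ᶠ r in atTop, ‖iteratedDeriv m f 0‖ ≤ m.factorial * r ^ k / r ^ m :=
    h.mp <| (eventually_gt_atTop 0).mono fun r hr hbd =>
      norm_iteratedDeriv_le_of_forall_mem_sphere_norm_le m hr hf.diffContOnCl hbd
  have hdecay : Tendsto (fun r : ℝ => m.factorial * r ^ k / r ^ m) atTop (𝓝 0) := by
    have := ((tendsto_pow_atTop (Nat.sub_ne_zero_of_lt hkm)).inv_tendsto_atTop).const_mul
      (m.factorial : ℝ)
    rw [mul_zero] at this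
    refine this.congr' ?_
    filter_upwards [eventually_gt_atTop 0] with r hr
    rw [Pi.inv_apply, ← Nat.add_sub_of_le hkm.le, pow_add, Nat.add_sub_cancel_left]
    field_simp
  exact norm_le_zero_iff.1 (ge_of_tendsto_of_frequently hdecay hcauchy)

theorem Differentiable.exists_polynomial_of_frequently_norm_le_pow {f : ℂ → ℂ}
    (hf : Differentiable ℂ f) {k : ℕ}
    (h : ∃ᶠ r in atTop, ∀ z ∈ Metric.sphere (0 : ℂ) r, ‖f z‖ ≤ r ^ k) :
    ∃ p : Polynomial ℂ, ∀ z, f z = p.eval z := by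
  refine ⟨∑ n ∈ Finset.range (k + 1),
    Polynomial.C ((n.factorial : ℂ)⁻¹ * iteratedDeriv n f 0) * Polynomial.X ^ n, fun z => ?_⟩
  have hfinite : HasSum (fun n : ℕ => (n.factorial : ℂ)⁻¹ • (z - 0) ^ n • iteratedDeriv n f 0)
      (∑ n ∈ Finset.range (k + 1), (n.factorial : ℂ)⁻¹ • (z - 0) ^ n • iteratedDeriv n f 0) :=
    hasSum_sum_of_ne_finset_zero fun n hn => by
      rw [hf.iteratedDeriv_eq_zero_of_frequently_norm_le_pow (by simpa using hn) h, smul_zero,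
        smul_zero]
  rw [(hasSum_taylorSeries_of_entire hf 0 z).unique hfinite, Polynomial.eval_finsetSum]
  refine Finset.sum_congr rfl fun n _ => ?_
  simp only [Polynomial.eval_mul, Polynomial.eval_C, Polynomial.eval_pow, Polynomial.eval_X,
    sub_zero, smul_eq_mul]
  ring

theorem norm_le_maxMod {f : ℂ → ℂ} (hf : Continuous f) {r : ℝ} {z : ℂ} (hz : ‖z‖ = r) :
    ‖f z‖ ≤ maxMod f r := by
  refine le_csSup ?_ ⟨z, hz, rfl⟩
  have : {z : ℂ | ‖z‖ = r} = Metric.sphere 0 r := by ext; simp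
  rw [this]
  exact ((isCompact_sphere 0 r).image hf.norm).bddAbove

theorem TranscendentalEntire.eventually_pow_le_maxMod {f : ℂ → ℂ} (hf : TranscendentalEntire f)
    (k : ℕ) : ∀ᶠ r in atTop, r ^ k ≤ maxMod f r := by
  by_contra h
  refine hf.2 (hf.1.exists_polynomial_of_frequently_norm_le_pow (k := k) ?_)
  exact (not_eventually.1 h).mono fun r hr z hz =>
    (norm_le_maxMod hf.1.continuous (mem_sphere_zero_iff_norm.1 hz)).trans (not_le.1 hr).le

theorem TranscendentalEntire.tendsto_log_maxMod_div_log {f : ℂ → ℂ} (hf : TranscendentalEntire f) :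
    Tendsto (fun r => Real.log (maxMod f r) / Real.log r) atTop atTop := by
  refine tendsto_atTop.2 fun K => ?_
  filter_upwards [hf.eventually_pow_le_maxMod ⌈K⌉₊, eventually_gt_atTop 1] with r hpow hr
  have hlog : 0 < Real.log r := Real.log_pos hr
  rw [le_div_iff₀ hlog]
  calc K * Real.log r ≤ ⌈K⌉₊ * Real.log r := by gcongr; exact Nat.le_ceil K
    _ = Real.log (r ^ ⌈K⌉₊) := (Real.log_pow _ _).symm
    _ ≤ Real.log (maxMod f r) := Real.log_le_log (by positivity) hpow

theorem maxMod_le_of_tendsto {f : ℂ → ℂ} (hf : Continuous f) {r : ℕ → ℝ} {l B : ℝ}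
    (hr : Tendsto r atTop (𝓝 l)) (hr0 : ∀ n, 0 ≤ r n) (hB : ∀ n, maxMod f (r n) ≤ B) :
    maxMod f l ≤ B := by
  have hl : 0 ≤ l := ge_of_tendsto' hr hr0
  refine csSup_le ⟨_, (l : ℂ), by simp [hl], rfl⟩ ?_
  rintro _ ⟨z, hz, rfl⟩
  set ω := exp (arg z * I)
  have hω : ‖ω‖ = 1 := norm_exp_ofReal_mul_I _
  have hz' : (l : ℂ) * ω = z := by
    rw [← show ‖z‖ = l from hz]
    exact norm_mul_exp_arg_mul_I z
  have hlim : Tendsto (fun n => ‖f (r n * ω)‖) atTop (𝓝 ‖f z‖) := by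
    rw [← hz']
    exact (hf.norm.tendsto _).comp (((continuous_ofReal.tendsto l).comp hr).mul_const ω)
  refine le_of_tendsto' hlim fun n => ?_
  exact (norm_le_maxMod hf (by simp [hω, abs_of_nonneg (hr0 n)])).trans (hB n)

theorem tendsto_iterate_maxMod_atTop {f : ℂ → ℂ} (hf : Continuous f) {R : ℝ} (hR : 0 ≤ R)
    (hM : ∀ r ≥ R, maxMod f r > r) : Tendsto (fun n => (maxMod f)^[n] R) atTop atTop := by
  have hge : ∀ n, R ≤ (maxMod f)^[n] R := by
    intro n
    induction n with
    | zero => exact le_rfl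
    | succ n ih => rw [iterate_succ_apply']; exact ih.trans (hM _ ih).le
  have hmono : Monotone fun n => (maxMod f)^[n] R := monotone_nat_of_le_succ fun n => by
    rw [iterate_succ_apply']; exact (hM _ (hge n)).le
  refine (tendsto_atTop_of_monotone hmono).resolve_right fun ⟨l, hl⟩ => ?_
  have hfix : maxMod f l ≤ l := maxMod_le_of_tendsto hf hl (fun n => hR.trans (hge n))
    fun n => by rw [← iterate_succ_apply' (maxMod f)]; exact hmono.ge_of_tendsto hl (n + 1)
  exact (hM l (ge_of_tendsto' hl hge)).not_ge hfix

theorem tendsto_div_natCast_atTop_of_tendsto_sub {v : ℕ → ℝ}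
    (hv : Tendsto (fun n => v (n + 1) - v n) atTop atTop) :
    Tendsto (fun n => v n / n) atTop atTop := by
  refine tendsto_atTop.2 fun b => ?_
  obtain ⟨N, hN⟩ := eventually_atTop.1 (tendsto_atTop.1 hv (b + 1))
  have hmono : MonotoneOn (fun n : ℕ => v n - (b + 1) * n) (Ici N) :=
    monotoneOn_nat_Ici_of_le_succ fun n hn => by push_cast; linarith [hN n hn]
  filter_upwards [eventually_ge_atTop N, eventually_gt_atTop ⌈(b + 1) * N - v N⌉₊]
    with n hNn hn
  have hvn := hmono (mem_Ici.2 le_rfl) (mem_Ici.2 hNn) hNn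
  have hn' := Nat.lt_of_ceil_lt hn
  rw [le_div_iff₀ (Nat.cast_pos.2 (by omega))]
  simp only at hvn
  linarith

theorem TranscendentalEntire.tendsto_log_log_iterate_maxMod_div {f : ℂ → ℂ}
    (hf : TranscendentalEntire f) {R : ℝ} (hR : 0 ≤ R) (hM : ∀ r ≥ R, maxMod f r > r) (L : ℕ) :
    Tendsto (fun n : ℕ => Real.log (Real.log ((maxMod f)^[n - L] R)) / n) atTop atTop := by
  set u : ℕ → ℝ := fun n => Real.log ((maxMod f)^[n] R)
  have horbit := tendsto_iterate_maxMod_atTop hf.1.continuous hR hM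
  have hpos : ∀ᶠ n in atTop, 0 < u n := (Real.tendsto_log_atTop.comp horbit).eventually_gt_atTop 0
  have hratio : Tendsto (fun n => u (n + 1) / u n) atTop atTop := by
    simpa only [u, iterate_succ_apply', comp_def] using hf.tendsto_log_maxMod_div_log.comp horbit
  have hgap : Tendsto (fun n => Real.log (u (n + 1)) - Real.log (u n)) atTop atTop := by
    refine (Real.tendsto_log_atTop.comp hratio).congr' ?_
    filter_upwards [hpos, (tendsto_add_atTop_nat 1).eventually hpos] with n hn hn1
    exact Real.log_div hn1.ne' hn.ne'
  refine tendsto_div_natCast_atTop_of_tendsto_sub ((hgap.comp (tendsto_sub_atTop_nat L)).congr' ?_)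
  filter_upwards [eventually_ge_atTop L] with n hn
  simp only [comp_apply, u, Nat.sub_add_comm hn]

theorem Afast_subset_Z (f : ℂ → ℂ) (hf : TranscendentalEntire f)
    (R : ℝ) (hR : 0 < R) (hM : ∀ r ≥ R, maxMod f r > r) :
    Afast f R ⊆ {z : ℂ | Tendsto
      (fun n : ℕ => Real.log (Real.log ‖f^[n] z‖) / n) atTop atTop} := by
  intro z hz
  obtain ⟨L, hzL⟩ := mem_iUnion.1 hz
  have hlarge : ∀ᶠ n in atTop, 1 < (maxMod f)^[n - L] R :=
    ((tendsto_iterate_maxMod_atTop hf.1.continuous hR.le hM).comp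
      (tendsto_sub_atTop_nat L)).eventually_gt_atTop 1
  refine tendsto_atTop_mono' atTop ?_ (hf.tendsto_log_log_iterate_maxMod_div hR.le hM L)
  filter_upwards [eventually_ge_atTop L, hlarge] with n hLn hn
  have hescape : (maxMod f)^[n - L] R ≤ ‖f^[n] z‖ := by
    have := hzL n (by omega)
    rwa [show ((n : ℤ) + -(L : ℤ)).toNat = n - L by omega] at this
  have hlog : 0 < Real.log ((maxMod f)^[n - L] R) := Real.log_pos hn
  gcongr
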